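/- arXiv:2503.00372 — 3 statements merged into one kernel-verified Lean document; each statement's English description precedes it below -/
import Mathlib

section
/- If the core of a cooperative game is nonempty, then any payoff vector x in the set of efficient imputations that lexicographically minimizes the non-increasing sorted vector of excesses θ(x) over all efficient payoff vectors also lies in the core. -/
open Finset

variable {N : Type*} [Fintype N] [DecidableEq N]

noncomputable def excess (u : Finset N → ℝ) (x : N → ℝ) (C : Finset N) : ℝ :=
  u C - ∑ i ∈ C, x i

noncomputable def theta (u : Finset N → ℝ) (x : N → ℝ) : List ℝ :=
  ((Finset.univ.powerset.val.map (excess u x)).sort (· ≤ ·)).reverse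

def lexLe (a b : List ℝ) : Prop := a = b ∨ List.Lex (· < ·) a b

/-!
Compare only the largest excesses: if `x` is a lexicographic minimiser and `y` lies in the core,
then every excess of `x` is at most the largest excess of `x`, which by `θ(x) ⪯ θ(y)` is at most
the largest excess of `y`, and that is `≤ 0` because `y` is in the core.
-/

theorem lexLe.head_le {l m : List ℝ} (h : lexLe l m) (hl : l ≠ []) (hm : m ≠ []) :
    l.head hl ≤ m.head hm := by
  obtain ⟨a, l, rfl⟩ := List.exists_cons_of_ne_nil hl
  obtain ⟨b, m, rfl⟩ := List.exists_cons_of_ne_nil hm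
  rcases h with h | h
  · obtain ⟨rfl, -⟩ := List.cons.inj h
    exact le_rfl
  · cases h with
    | cons _ => exact le_rfl
    | rel hab => exact hab.le

section

variable {ι : Type*} [Fintype ι]

theorem mem_theta_iff {u : Finset ι → ℝ} {x : ι → ℝ} {e : ℝ} :
    e ∈ theta u x ↔ ∃ C, excess u x C = e := by
  simp [theta]

theorem theta_ne_nil (u : Finset ι → ℝ) (x : ι → ℝ) : theta u x ≠ [] :=
  List.ne_nil_of_mem (mem_theta_iff.2 ⟨∅, rfl⟩)

theorem excess_le_head_theta (u : Finset ι → ℝ) (x : ι → ℝ) (C : Finset ι) :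
    excess u x C ≤ (theta u x).head (theta_ne_nil u x) := by
  have hsorted : (theta u x).Pairwise (· ≥ ·) :=
    List.pairwise_reverse.2 (Multiset.pairwise_sort _ _)
  obtain ⟨a, t, hat⟩ := List.exists_cons_of_ne_nil (theta_ne_nil u x)
  have hmem : excess u x C ∈ a :: t := hat ▸ mem_theta_iff.2 ⟨C, rfl⟩
  rw [hat] at hsorted
  simp only [hat, List.head_cons]
  rcases List.mem_cons.1 hmem with h | h
  · exact h.le
  · exact List.rel_of_pairwise_cons hsorted h

theorem exists_excess_le_of_lexLe {u : Finset ι → ℝ} {x y : ι → ℝ}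
    (h : lexLe (theta u x) (theta u y)) (C : Finset ι) : ∃ D, excess u x C ≤ excess u y D := by
  obtain ⟨D, hD⟩ := mem_theta_iff.1 (List.head_mem (theta_ne_nil u y))
  refine ⟨D, ?_⟩
  calc excess u x C ≤ (theta u x).head (theta_ne_nil u x) := excess_le_head_theta u x C
    _ ≤ (theta u y).head (theta_ne_nil u y) := h.head_le _ _
    _ = excess u y D := hD.symm

end

theorem lexmin_mem_core_of_core_nonempty_general (u : Finset N → ℝ)
    (hcore : ∃ y : N → ℝ, (∑ i, y i = u Finset.univ) ∧
      ∀ C : Finset N, u C ≤ ∑ i ∈ C, y i)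
    (x : N → ℝ)
    (hmin : ∀ y : N → ℝ, (∑ i, y i = u Finset.univ) → lexLe (theta u x) (theta u y)) :
    ∀ C : Finset N, u C ≤ ∑ i ∈ C, x i := by
  obtain ⟨y, hy, hy_core⟩ := hcore
  intro C
  obtain ⟨D, hCD⟩ := exists_excess_le_of_lexLe (hmin y hy) C
  have hD := hy_core D
  simp only [excess] at hCD
  linarith

/-- If the core is nonempty, then any efficient payoff vector `x` that lexicographically
minimizes the non-increasing sorted excess vector `θ` over all efficient payoff vectors
also lies in the core. -/
theorem lexmin_mem_core_of_core_nonempty (u : Finset N → ℝ) (hu : u ∅ = 0)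
    (hcore : ∃ y : N → ℝ, (∑ i, y i = u Finset.univ) ∧
      ∀ C : Finset N, u C ≤ ∑ i ∈ C, y i)
    (x : N → ℝ) (hx : ∑ i, x i = u Finset.univ)
    (hmin : ∀ y : N → ℝ, (∑ i, y i = u Finset.univ) → lexLe (theta u x) (theta u y)) :
    ∀ C : Finset N, u C ≤ ∑ i ∈ C, x i :=
  lexmin_mem_core_of_core_nonempty_general u hcore x hmin
end

section
/- The set of payoff vectors minimizing the maximum excess, argmin_x max_{C⊆N, C≠∅} e(C,x) over the set of efficient payoff vectors {x : Σ_{i∈N} x_i = u(N)}, is a nonempty, compact, convex subset of ℝ^N. -/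
open Finset

variable {N : Type*} [Fintype N] [DecidableEq N] [Nonempty N]

/-- The maximum excess over nonempty coalitions,
`φ(x) = max_{C ⊆ N, C ≠ ∅} (u(C) - Σ_{i∈C} x_i)`. -/
noncomputable def maxExcessNe (u : Finset N → ℝ) (x : N → ℝ) : ℝ :=
  (Finset.univ.powerset.filter fun C => C ≠ ∅).sup'
    ⟨Finset.univ, by simp [Finset.mem_filter, Finset.univ_nonempty.ne_empty]⟩
    fun C => u C - ∑ i ∈ C, x i

lemma le_maxExcessNe (u : Finset N → ℝ) (x : N → ℝ) {C : Finset N} (hC : C ≠ ∅) :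
    u C - ∑ i ∈ C, x i ≤ maxExcessNe u x := by
  unfold maxExcessNe
  exact Finset.le_sup' (fun C => u C - ∑ i ∈ C, x i) (by simp [Finset.mem_filter, hC])

lemma maxExcessNe_le (u : Finset N → ℝ) (x : N → ℝ) {a : ℝ}
    (h : ∀ C : Finset N, C ≠ ∅ → u C - ∑ i ∈ C, x i ≤ a) :
    maxExcessNe u x ≤ a := by
  apply Finset.sup'_le
  intro C hC
  exact h C (by simpa [Finset.mem_filter] using hC)

lemma continuous_maxExcessNe (u : Finset N → ℝ) : Continuous (maxExcessNe u) := by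
  apply Continuous.finset_sup'_apply
  intro C _
  exact continuous_const.sub (continuous_finset_sum _ fun i _ => continuous_apply i)

/-- The set of efficient payoff vectors minimizing the maximum excess over nonempty
coalitions is a nonempty, compact, convex subset of `ℝ^N`. -/
theorem argmin_maxExcess_nonempty_compact_convex (u : Finset N → ℝ) (hu : u ∅ = 0) :
    let M : Set (N → ℝ) := {x | (∑ i, x i = u Finset.univ) ∧
      ∀ y : N → ℝ, (∑ i, y i = u Finset.univ) → maxExcessNe u x ≤ maxExcessNe u y}
    M.Nonempty ∧ IsCompact M ∧ Convex ℝ M := by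
  intro M
  set T : ℝ := u Finset.univ with hT
  have hcard : (0:ℝ) < Fintype.card N := by
    exact_mod_cast Fintype.card_pos
  -- a reference efficient vector
  set x₀ : N → ℝ := fun _ => T / Fintype.card N with hx₀def
  have hx₀ : ∑ i, x₀ i = T := by
    simp only [hx₀def, Finset.sum_const, Finset.card_univ, nsmul_eq_mul]
    field_simp
  set a : ℝ := maxExcessNe u x₀ with ha
  set lo : N → ℝ := fun i => u {i} - a with hlo
  set hi : N → ℝ := fun i => T - ∑ j ∈ Finset.univ.erase i, lo j with hhi
  set K : Set (N → ℝ) := {x | ∑ i, x i = T ∧ maxExcessNe u x ≤ a} with hK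
  have hcont : Continuous (maxExcessNe u) := continuous_maxExcessNe u
  have hsumcont : Continuous fun x : N → ℝ => ∑ i, x i :=
    continuous_finset_sum _ fun i _ => continuous_apply i
  -- lower bounds on sublevel sets
  have hlow : ∀ x : N → ℝ, maxExcessNe u x ≤ a → ∀ i, lo i ≤ x i := by
    intro x hx i
    have := le_maxExcessNe u x (C := {i}) (by simp)
    simp only [Finset.sum_singleton] at this
    simp only [hlo]
    linarith
  have hKsub : K ⊆ Set.Icc lo hi := by
    rintro x ⟨hxs, hxa⟩
    refine ⟨fun i => hlow x hxa i, fun i => ?_⟩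
    have hsplit : ∑ j ∈ Finset.univ.erase i, x j + x i = ∑ j, x j :=
      Finset.sum_erase_add _ _ (Finset.mem_univ i)
    have hge : ∑ j ∈ Finset.univ.erase i, lo j ≤ ∑ j ∈ Finset.univ.erase i, x j :=
      Finset.sum_le_sum fun j _ => hlow x hxa j
    simp only [hhi]
    rw [hxs] at hsplit
    linarith
  have hKclosed : IsClosed K := by
    exact (isClosed_eq hsumcont continuous_const).inter (isClosed_le hcont continuous_const)
  have hKcompact : IsCompact K := IsCompact.of_isClosed_subset isCompact_Icc hKclosed hKsub
  have hx₀K : x₀ ∈ K := ⟨hx₀, le_rfl⟩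
  obtain ⟨z, hzK, hzmin⟩ := hKcompact.exists_isMinOn ⟨x₀, hx₀K⟩ hcont.continuousOn
  -- z minimizes over the whole efficient hyperplane
  have hzglobal : ∀ y : N → ℝ, ∑ i, y i = T → maxExcessNe u z ≤ maxExcessNe u y := by
    intro y hy
    by_cases hya : maxExcessNe u y ≤ a
    · exact hzmin ⟨hy, hya⟩
    · exact le_trans (hzK.2) (le_of_not_ge hya)
  have hzM : z ∈ M := ⟨hzK.1, hzglobal⟩
  refine ⟨⟨z, hzM⟩, ?_, ?_⟩
  · -- compact
    have hMeq : M = {x : N → ℝ | ∑ i, x i = T} ∩ {x | maxExcessNe u x ≤ maxExcessNe u z} := by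
      ext x
      constructor
      · rintro ⟨hxs, hxmin⟩
        exact ⟨hxs, hxmin z hzK.1⟩
      · rintro ⟨hxs, hxle⟩
        exact ⟨hxs, fun y hy => le_trans hxle (hzglobal y hy)⟩
    have hMclosed : IsClosed M := by
      rw [hMeq]
      exact (isClosed_eq hsumcont continuous_const).inter (isClosed_le hcont continuous_const)
    have hMsub : M ⊆ K := by
      rintro x ⟨hxs, hxmin⟩
      exact ⟨hxs, le_trans (hxmin x₀ hx₀) le_rfl⟩
    exact IsCompact.of_isClosed_subset hKcompact hMclosed hMsub
  · -- convex
    rintro x ⟨hxs, hxmin⟩ y ⟨hys, hymin⟩ s t hs ht hst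
    have hsum : ∑ i, (s • x + t • y) i = T := by
      simp only [Pi.add_apply, Pi.smul_apply, smul_eq_mul]
      rw [Finset.sum_add_distrib, ← Finset.mul_sum, ← Finset.mul_sum, hxs, hys]
      have hs1 : s = 1 - t := by linarith
      rw [hs1]; ring
    have hcomb : ∀ w : N → ℝ, ∑ i, w i = T →
        maxExcessNe u (s • x + t • y) ≤ maxExcessNe u w := by
      intro w hw
      apply maxExcessNe_le
      intro C hC
      have h1 : u C - ∑ i ∈ C, x i ≤ maxExcessNe u w := le_trans (le_maxExcessNe u x hC |>.trans (hxmin w hw)) le_rfl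
      have h2 : u C - ∑ i ∈ C, y i ≤ maxExcessNe u w := le_trans (le_maxExcessNe u y hC |>.trans (hymin w hw)) le_rfl
      have hexp : u C - ∑ i ∈ C, (s • x + t • y) i
          = s * (u C - ∑ i ∈ C, x i) + t * (u C - ∑ i ∈ C, y i) := by
        simp only [Pi.add_apply, Pi.smul_apply, smul_eq_mul]
        rw [Finset.sum_add_distrib, ← Finset.mul_sum, ← Finset.mul_sum]
        have hs1 : s = 1 - t := by linarith
        rw [hs1]; ring
      rw [hexp]
      calc s * (u C - ∑ i ∈ C, x i) + t * (u C - ∑ i ∈ C, y i)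
          ≤ s * maxExcessNe u w + t * maxExcessNe u w :=
            add_le_add (mul_le_mul_of_nonneg_left h1 hs) (mul_le_mul_of_nonneg_left h2 ht)
        _ = maxExcessNe u w := by rw [← add_mul, hst, one_mul]
    exact ⟨hsum, hcomb⟩
end

section
/- (Uniqueness of nucleolus on a compact convex set) Let X ⊆ ℝ^N be a nonempty compact convex set of payoff vectors for a cooperative game (N,u). Then the set of x ∈ X whose sorted excess vector θ(x) is lexicographically minimal over X is nonempty; moreover if X is the set of imputations, this set is a singleton (the nucleolus is unique). -/
open Finset

variable {N : Type*} [Fintype N] [DecidableEq N]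

/-!
Write `topSum f k` for the sum of the `k` largest entries of `f`; it is the maximum of
`∑ i ∈ S, f i` over `k`-element sets `S`, hence continuous and convex in `f`. The entries of the
sorted excess vector θ are the increments of `k ↦ topSum`, so θ is continuous, and minimizing its
coordinates one after another over the compact set `X` yields a lexicographic minimum.

If `x ≠ y` both attain the minimum, then θ(x) = θ(y), and convexity of `topSum` gives
θ(z) ≤ θ(x) for the midpoint `z` (prefix sums dominate, hence lexicographic order). Equality
would give the excess vectors of `x`, `y`, `z` equal sums of squares, which strict convexity of
the square forbids since the excess map is injective and affine. So θ(z) < θ(x), a contradiction.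
-/

namespace List

variable {α : Type*} [AddCommGroup α] [LinearOrder α] [IsOrderedAddMonoid α]

theorem sum_take_le_sum_take_cons {a : α} {l : List α} (hl : (a :: l).Pairwise (· ≥ ·)) :
    ∀ {k : ℕ}, k ≤ l.length → (l.take k).sum ≤ ((a :: l).take k).sum := by
  induction l generalizing a with
  | nil => simp
  | cons b l ih =>
    intro k hk
    rcases k with _ | k
    · simp
    have hab : b ≤ a := (pairwise_cons.mp hl).1 b mem_cons_self
    have := ih (pairwise_cons.mp hl).2 (k := k) (by simpa using hk)
    simp only [take_succ_cons, sum_cons]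
    exact add_le_add hab this

theorem Sublist.sum_le_sum_take {l L : List α} (h : l <+ L) (hL : L.Pairwise (· ≥ ·)) :
    l.sum ≤ (L.take l.length).sum := by
  induction h with
  | slnil => simp
  | cons a h ih =>
    exact (ih (pairwise_cons.mp hL).2).trans (sum_take_le_sum_take_cons hL h.length_le)
  | cons_cons a _ ih =>
    simpa using ih (pairwise_cons.mp hL).2

theorem le_of_sum_take_le : ∀ {a b : List α}, a.length = b.length →
    (∀ k ≤ a.length, (a.take k).sum ≤ (b.take k).sum) → a ≤ b
  | [], [], _, _ => le_rfl
  | x :: a, y :: b, hlen, h => by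
    rcases (show x ≤ y by simpa using h 1 (by simp)).lt_or_eq with hxy | rfl
    · exact (show x :: a < y :: b from .rel hxy).le
    · refine cons_le_cons x (le_of_sum_take_le (by simpa using hlen) fun k hk => ?_)
      simpa using h (k + 1) (by simpa using hk)

end List

theorem IsCompact.exists_forall_ofFn_le {X β : Type*} [TopologicalSpace X] [LinearOrder β]
    [TopologicalSpace β] [OrderClosedTopology β] {n : ℕ} {K : Set X} (hK : IsCompact K)
    (hne : K.Nonempty) {F : X → Fin n → β} (hF : Continuous F) :
    ∃ x ∈ K, ∀ y ∈ K, List.ofFn (F x) ≤ List.ofFn (F y) := by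
  induction n generalizing K with
  | zero =>
    obtain ⟨x, hx⟩ := hne
    exact ⟨x, hx, fun y _ => by simp⟩
  | succ n ih =>
    have hF₀ : Continuous fun x => F x 0 := (continuous_apply 0).comp hF
    obtain ⟨x₀, hx₀, hmin⟩ := hK.exists_isMinOn hne hF₀.continuousOn
    obtain ⟨x, ⟨hxK, hx0⟩, hx⟩ := ih (F := fun x i => F x i.succ)
      (hK.inter_right (isClosed_singleton.preimage hF₀)) ⟨x₀, hx₀, rfl⟩
      (continuous_pi fun i => (continuous_apply i.succ).comp hF)
    refine ⟨x, hxK, fun y hy => ?_⟩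
    simp only [Set.mem_preimage, Set.mem_singleton_iff] at hx0
    simp only [List.ofFn_succ, hx0]
    rcases (show F x₀ 0 ≤ F y 0 from hmin hy).lt_or_eq with hlt | heq
    · exact (show _ < _ from List.Lex.rel hlt).le
    · rw [heq]
      exact List.cons_le_cons _ (hx y ⟨hy, heq.symm⟩)

theorem Multiset.exists_le_map_eq {α β : Type*} {f : α → β} {s : Multiset β} {t : Multiset α}
    (h : s ≤ t.map f) : ∃ t' ≤ t, t'.map f = s := by
  induction s using Quotient.inductionOn
  induction t using Quotient.inductionOn
  obtain ⟨l, hl, hsub⟩ := Multiset.coe_le.1 h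
  obtain ⟨l', hl', rfl⟩ := List.sublist_map_iff.1 hsub
  exact ⟨l', Multiset.coe_le.2 hl'.subperm, Multiset.coe_eq_coe.2 hl⟩

section SortDesc

variable {α : Type*} [Fintype α]

noncomputable def sortDesc (f : α → ℝ) : List ℝ :=
  ((univ.val.map f).sort (· ≤ ·)).reverse

noncomputable def topSum (f : α → ℝ) (k : ℕ) : ℝ :=
  ((sortDesc f).take k).sum

theorem length_sortDesc (f : α → ℝ) : (sortDesc f).length = Fintype.card α := by
  simp [sortDesc]

theorem coe_sortDesc (f : α → ℝ) : (sortDesc f : Multiset ℝ) = univ.val.map f := by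
  simp [sortDesc]

theorem pairwise_sortDesc (f : α → ℝ) : (sortDesc f).Pairwise (· ≥ ·) :=
  List.pairwise_reverse.2 (Multiset.pairwise_sort _ _)

theorem sum_le_topSum (f : α → ℝ) (S : Finset α) : ∑ i ∈ S, f i ≤ topSum f #S := by
  have hS : ((S.toList.map f : List ℝ) : Multiset ℝ) ≤ sortDesc f := by
    rw [coe_sortDesc, ← Multiset.map_coe, coe_toList]
    exact Multiset.map_le_map (val_le_iff.2 (subset_univ S))
  obtain ⟨l, hl, hsub⟩ := Multiset.coe_le.1 hS
  calc ∑ i ∈ S, f i = l.sum := by rw [hl.sum_eq, ← sum_map_toList]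
    _ ≤ ((sortDesc f).take l.length).sum := hsub.sum_le_sum_take (pairwise_sortDesc f)
    _ = topSum f #S := by rw [hl.length_eq, List.length_map, length_toList, topSum]

theorem exists_card_eq_sum_eq_topSum (f : α → ℝ) {k : ℕ} (hk : k ≤ Fintype.card α) :
    ∃ S : Finset α, #S = k ∧ ∑ i ∈ S, f i = topSum f k := by
  have htake : (((sortDesc f).take k : List ℝ) : Multiset ℝ) ≤ univ.val.map f := by
    rw [← coe_sortDesc]
    exact Multiset.coe_le.2 (List.take_sublist _ _).subperm
  obtain ⟨s, hs, hsf⟩ := Multiset.exists_le_map_eq htake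
  refine ⟨⟨s, Multiset.nodup_of_le hs univ.nodup⟩, ?_, ?_⟩
  · simpa [length_sortDesc, hk] using congrArg Multiset.card hsf
  · simpa [topSum] using congrArg Multiset.sum hsf

theorem topSum_eq_sup' (f : α → ℝ) {k : ℕ} (hne : (powersetCard k (univ : Finset α)).Nonempty) :
    topSum f k = (powersetCard k univ).sup' hne fun S => ∑ i ∈ S, f i := by
  have hk : k ≤ Fintype.card α := by simpa using powersetCard_nonempty.1 hne
  refine le_antisymm ?_ (sup'_le _ _ fun S hS => ?_)
  · obtain ⟨S, hS, hsum⟩ := exists_card_eq_sum_eq_topSum f hk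
    exact hsum ▸ le_sup' (fun S => ∑ i ∈ S, f i) (mem_powersetCard.2 ⟨subset_univ S, hS⟩)
  · exact (mem_powersetCard.1 hS).2 ▸ sum_le_topSum f S

theorem continuous_topSum {X : Type*} [TopologicalSpace X] {F : X → α → ℝ} (hF : Continuous F)
    {k : ℕ} (hk : k ≤ Fintype.card α) : Continuous fun x => topSum (F x) k := by
  have hne : (powersetCard k (univ : Finset α)).Nonempty := powersetCard_nonempty.2 (by simpa)
  simp_rw [topSum_eq_sup' _ hne]
  exact Continuous.finset_sup'_apply hne fun S _ =>
    continuous_finsetSum S fun i _ => (continuous_apply i).comp hF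

theorem convexOn_topSum {k : ℕ} (hk : k ≤ Fintype.card α) :
    ConvexOn ℝ Set.univ fun f : α → ℝ => topSum f k := by
  refine ⟨convex_univ, fun f _ g _ a b ha hb _ => ?_⟩
  obtain ⟨S, rfl, hsum⟩ := exists_card_eq_sum_eq_topSum (a • f + b • g) hk
  simp only [← hsum, Pi.add_apply, Pi.smul_apply, smul_eq_mul, sum_add_distrib, ← mul_sum]
  exact add_le_add (mul_le_mul_of_nonneg_left (sum_le_topSum f S) ha)
    (mul_le_mul_of_nonneg_left (sum_le_topSum g S) hb)

theorem sortDesc_eq_ofFn (f : α → ℝ) :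
    sortDesc f = List.ofFn fun i : Fin (Fintype.card α) => topSum f (i + 1) - topSum f i := by
  refine List.ext_getElem (by simp [length_sortDesc]) fun i h _ => ?_
  simp [topSum, List.sum_take_succ _ _ h]

theorem sum_comp_eq_of_sortDesc_eq {f g : α → ℝ} (h : sortDesc f = sortDesc g) (φ : ℝ → ℝ) :
    ∑ i, φ (f i) = ∑ i, φ (g i) := by
  have hsum (f : α → ℝ) : ∑ i, φ (f i) = ((sortDesc f : Multiset ℝ).map φ).sum := by
    rw [coe_sortDesc, Multiset.map_map]
    rfl
  rw [hsum, hsum, h]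

-- Equal sorted vectors have equal sums of squares, and the sum of squares is strictly convex.
theorem eq_of_sortDesc_midpoint_eq {f g : α → ℝ} (hfg : sortDesc f = sortDesc g)
    (hmid : sortDesc ((1 / 2 : ℝ) • f + (1 / 2 : ℝ) • g) = sortDesc f) : f = g := by
  have hf := sum_comp_eq_of_sortDesc_eq hfg (· ^ 2)
  have hm := sum_comp_eq_of_sortDesc_eq hmid (· ^ 2)
  simp only [Pi.add_apply, Pi.smul_apply, smul_eq_mul] at hm
  have hsq : ∑ i, (f i - g i) ^ 2 = 0 := by
    have hpar : ∀ i, (f i - g i) ^ 2 =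
        2 * f i ^ 2 + 2 * g i ^ 2 - 4 * (1 / 2 * f i + 1 / 2 * g i) ^ 2 := fun i => by ring
    simp only [hpar, sum_sub_distrib, sum_add_distrib, ← mul_sum, hm, ← hf]
    ring
  funext i
  have := (sum_eq_zero_iff_of_nonneg fun i _ => sq_nonneg (f i - g i)).1 hsq i (mem_univ i)
  exact sub_eq_zero.1 (pow_eq_zero_iff two_ne_zero |>.1 this)

theorem sortDesc_midpoint_lt {f g : α → ℝ} (hfg : sortDesc f = sortDesc g) (hne : f ≠ g) :
    sortDesc ((1 / 2 : ℝ) • f + (1 / 2 : ℝ) • g) < sortDesc f := by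
  refine lt_of_le_of_ne (List.le_of_sum_take_le (by simp [length_sortDesc]) fun k hk => ?_)
    fun h => hne (eq_of_sortDesc_midpoint_eq hfg h)
  rw [length_sortDesc] at hk
  calc topSum ((1 / 2 : ℝ) • f + (1 / 2 : ℝ) • g) k ≤ 1 / 2 * topSum f k + 1 / 2 * topSum g k :=
        (convexOn_topSum hk).2 trivial trivial (by norm_num) (by norm_num) (by norm_num)
    _ = topSum f k := by rw [topSum, topSum, hfg]; ring

end SortDesc

theorem lexLe_iff_le {a b : List ℝ} : lexLe a b ↔ a ≤ b := Iff.rfl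

section Game

variable {ι : Type*}

theorem theta_eq_sortDesc [Fintype ι] (u : Finset ι → ℝ) (x : ι → ℝ) :
    theta u x = sortDesc (excess u x) := by
  rw [theta, sortDesc, powerset_univ]

theorem continuous_excess (u : Finset ι → ℝ) : Continuous (excess u) :=
  continuous_pi fun C => by unfold excess; fun_prop

theorem excess_injective (u : Finset ι → ℝ) : Function.Injective (excess u) :=
  fun x y h => funext fun i => by simpa [excess] using congrFun h {i}

theorem excess_add_smul (u : Finset ι → ℝ) (x y : ι → ℝ) {a b : ℝ} (hab : a + b = 1) :
    excess u (a • x + b • y) = a • excess u x + b • excess u y := by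
  funext C
  simp only [excess, Pi.add_apply, Pi.smul_apply, smul_eq_mul, sum_add_distrib, ← mul_sum]
  linear_combination (u C) * hab.symm

theorem exists_forall_theta_le [Fintype ι] (u : Finset ι → ℝ) {X : Set (ι → ℝ)}
    (hX : IsCompact X) (hne : X.Nonempty) : ∃ x ∈ X, ∀ y ∈ X, theta u x ≤ theta u y := by
  simp_rw [theta_eq_sortDesc, sortDesc_eq_ofFn]
  have hsum (k : ℕ) (hk : k ≤ Fintype.card (Finset ι)) :=
    continuous_topSum (continuous_excess u) hk
  exact hX.exists_forall_ofFn_le hne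
    (continuous_pi fun i => (hsum _ i.2).sub (hsum _ i.2.le))

theorem subsingleton_theta_minimizers [Fintype ι] (u : Finset ι → ℝ) {X : Set (ι → ℝ)}
    (hX : Convex ℝ X) :
    {x ∈ X | ∀ y ∈ X, theta u x ≤ theta u y}.Subsingleton := by
  rintro x ⟨hxX, hx⟩ y ⟨hyX, hy⟩
  by_contra hxy
  have hθ : sortDesc (excess u x) = sortDesc (excess u y) := by
    simpa only [theta_eq_sortDesc] using le_antisymm (hx y hyX) (hy x hxX)
  have hhalf : (0 : ℝ) ≤ 1 / 2 := by norm_num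
  have hmid := hx _ (hX hxX hyX hhalf hhalf (by norm_num))
  rw [theta_eq_sortDesc, theta_eq_sortDesc, excess_add_smul u x y (by norm_num)] at hmid
  exact (sortDesc_midpoint_lt hθ ((excess_injective u).ne hxy)).not_ge hmid

end Game

/-- Over a nonempty compact convex set `X` of payoff vectors, the set of lexicographic
minimizers of the sorted excess vector `θ` is nonempty; moreover if `X` is the
(nonempty) set of imputations, this set is a singleton: the nucleolus is unique. -/
theorem nucleolus_exists_and_unique (u : Finset N → ℝ) (X : Set (N → ℝ))
    (hne : X.Nonempty) (hcomp : IsCompact X) (hconv : Convex ℝ X) :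
    {x ∈ X | ∀ y ∈ X, lexLe (theta u x) (theta u y)}.Nonempty ∧
    (X = {x : N → ℝ | (∑ i, x i = u Finset.univ) ∧ ∀ i : N, u {i} ≤ x i} →
      ∃ z : N → ℝ, {x ∈ X | ∀ y ∈ X, lexLe (theta u x) (theta u y)} = {z}) := by
  simp only [lexLe_iff_le]
  obtain ⟨x, hxX, hx⟩ := exists_forall_theta_le u hcomp hne
  refine ⟨⟨x, hxX, hx⟩, fun _ => ⟨x, ?_⟩⟩
  exact (subsingleton_theta_minimizers u hconv).eq_singleton_of_mem ⟨hxX, hx⟩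
end
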